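/- Gaussian expectation identity (perpendicular component, phase retrieval). Let Z₁, Z₂ be independent standard normal random variables, let α > 0 and β ≥ 0, and set φ = arctan(β/α). Then E[ sign(αZ₁ + βZ₂) · |Z₁| · Z₂ ] = (2/π)·sin²(φ). -/

import Mathlib

open MeasureTheory ProbabilityTheory

open Real Set Filter

section Helpers

lemma PRaux.hda (a x : ℝ) (ha : a ≠ 0) :
    HasDerivAt (fun y => -a⁻¹ * Real.exp (-(a * y^2)/2)) (x * Real.exp (-(a*x^2)/2)) x := by
  have h1 : HasDerivAt (fun y : ℝ => -(a * y^2)/2) (-(a*x)) x := by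
    have h2 := (((hasDerivAt_pow 2 x).const_mul a).neg).div_const 2
    refine h2.congr_deriv ?_
    norm_num; ring
  have h3 := (h1.exp).const_mul (-a⁻¹)
  refine h3.congr_deriv ?_
  field_simp

lemma PRaux.tends_exp_top (a : ℝ) (ha : 0 < a) :
    Filter.Tendsto (fun y => -a⁻¹ * Real.exp (-(a * y^2)/2)) Filter.atTop (nhds 0) := by
  rw [show (0:ℝ) = -a⁻¹ * 0 by ring]
  refine Filter.Tendsto.const_mul _ ?_
  refine Real.tendsto_exp_atBot.comp ?_
  refine Filter.Tendsto.atBot_div_const two_pos ?_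
  refine Filter.tendsto_neg_atTop_atBot.comp ?_
  exact (Filter.tendsto_pow_atTop (n := 2) (by norm_num)).const_mul_atTop ha

lemma PRaux.sqbot : Filter.Tendsto (fun y : ℝ => y^2) Filter.atBot Filter.atTop := by
  have h := (Filter.tendsto_pow_atTop (n := 2) (by norm_num)).comp
    Filter.tendsto_neg_atBot_atTop (α := ℝ)
  exact h.congr fun y => by simp [Function.comp]

lemma PRaux.tends_exp_bot (a : ℝ) (ha : 0 < a) :
    Filter.Tendsto (fun y => -a⁻¹ * Real.exp (-(a * y^2)/2)) Filter.atBot (nhds 0) := by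
  rw [show (0:ℝ) = -a⁻¹ * 0 by ring]
  refine Filter.Tendsto.const_mul _ ?_
  refine Real.tendsto_exp_atBot.comp ?_
  refine Filter.Tendsto.atBot_div_const two_pos ?_
  refine Filter.tendsto_neg_atTop_atBot.comp ?_
  exact PRaux.sqbot.const_mul_atTop ha

lemma PRaux.intExp (a : ℝ) (ha : 0 < a) :
    Integrable (fun x : ℝ => x * Real.exp (-(a*x^2)/2)) := by
  have h := integrable_mul_exp_neg_mul_sq (b := a/2) (by positivity)
  refine h.congr (Filter.EventuallyEq.of_eq ?_)
  funext x; ring_nf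

lemma PRaux.intAbsExp (a : ℝ) (ha : 0 < a) :
    Integrable (fun x : ℝ => |x| * Real.exp (-(a*x^2)/2)) := by
  have h := (PRaux.intExp a ha).abs
  refine h.congr (Filter.EventuallyEq.of_eq ?_)
  funext x
  rw [abs_mul, abs_of_pos (Real.exp_pos _)]

lemma PRaux.intAbsExp1 : Integrable (fun x : ℝ => |x| * Real.exp (-(x^2)/2)) := by
  have h := PRaux.intAbsExp 1 one_pos
  simpa using h

lemma PRaux.L1 (a c : ℝ) (ha : 0 < a) :
    ∫ x in Ioi c, x * Real.exp (-(a*x^2)/2) = a⁻¹ * Real.exp (-(a*c^2)/2) := by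
  have := integral_Ioi_of_hasDerivAt_of_tendsto (f := fun y => -a⁻¹ * Real.exp (-(a * y^2)/2))
    (f' := fun x => x * Real.exp (-(a*x^2)/2)) (a := c)
    (PRaux.hda a c ha.ne').continuousAt.continuousWithinAt
    (fun x _ => PRaux.hda a x ha.ne') ((PRaux.intExp a ha).integrableOn)
    (PRaux.tends_exp_top a ha)
  rw [this]; ring

lemma PRaux.L2 (a c : ℝ) (ha : 0 < a) :
    ∫ x in Iio c, x * Real.exp (-(a*x^2)/2) = -a⁻¹ * Real.exp (-(a*c^2)/2) := by
  rw [← integral_Iic_eq_integral_Iio]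
  have := integral_Iic_of_hasDerivAt_of_tendsto (f := fun y => -a⁻¹ * Real.exp (-(a * y^2)/2))
    (f' := fun x => x * Real.exp (-(a*x^2)/2)) (a := c)
    (PRaux.hda a c ha.ne').continuousAt.continuousWithinAt
    (fun x _ => PRaux.hda a x ha.ne') ((PRaux.intExp a ha).integrableOn)
    (PRaux.tends_exp_bot a ha)
  rw [this]; ring

lemma PRaux.Ltot (a : ℝ) (ha : 0 < a) :
    ∫ x : ℝ, |x| * Real.exp (-(a*x^2)/2) = 2/a := by
  rw [← integral_add_compl measurableSet_Iio (PRaux.intAbsExp a ha), compl_Iio]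
  have h1 : ∫ x in Iio (0:ℝ), |x| * Real.exp (-(a*x^2)/2)
      = ∫ x in Iio (0:ℝ), (-x) * Real.exp (-(a*x^2)/2) := by
    refine setIntegral_congr_fun measurableSet_Iio fun x hx => ?_
    rw [abs_of_neg hx]
  have h2 : ∫ x in Ici (0:ℝ), |x| * Real.exp (-(a*x^2)/2)
      = ∫ x in Ici (0:ℝ), x * Real.exp (-(a*x^2)/2) := by
    refine setIntegral_congr_fun measurableSet_Ici fun x hx => ?_
    rw [abs_of_nonneg hx]
  rw [h1, h2, integral_Ici_eq_integral_Ioi, PRaux.L1 a 0 ha]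
  have h3 : ∫ x in Iio (0:ℝ), (-x) * Real.exp (-(a*x^2)/2)
      = - ∫ x in Iio (0:ℝ), x * Real.exp (-(a*x^2)/2) := by
    rw [← integral_neg]; simp [neg_mul]
  rw [h3, PRaux.L2 a 0 ha]
  field_simp
  norm_num

lemma PRaux.htot : ∫ x : ℝ, |x| * Real.exp (-(x^2)/2) = 2 := by
  have := PRaux.Ltot 1 one_pos
  simp only [one_mul] at this
  norm_num at this
  exact this

lemma PRaux.T1 (t : ℝ) (ht : t ≤ 0) :
    ∫ x in Iio t, |x| * Real.exp (-(x^2)/2) = Real.exp (-(t^2)/2) := by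
  have h1 : ∫ x in Iio t, |x| * Real.exp (-(x^2)/2)
      = ∫ x in Iio t, -(x * Real.exp (-(1*x^2)/2)) := by
    refine setIntegral_congr_fun measurableSet_Iio fun x hx => ?_
    rw [abs_of_neg (lt_of_lt_of_le hx ht)]; ring_nf
  rw [h1, integral_neg, PRaux.L2 1 t one_pos]
  norm_num

lemma PRaux.T2 (t : ℝ) (ht : 0 ≤ t) :
    ∫ x in Iio t, |x| * Real.exp (-(x^2)/2) = 2 - Real.exp (-(t^2)/2) := by
  have key := integral_add_compl (measurableSet_Iio (a := t)) PRaux.intAbsExp1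
  rw [compl_Iio] at key
  have h2 : ∫ x in Ici t, |x| * Real.exp (-(x^2)/2) = Real.exp (-(t^2)/2) := by
    have : ∫ x in Ici t, |x| * Real.exp (-(x^2)/2)
        = ∫ x in Ici t, x * Real.exp (-(1*x^2)/2) := by
      refine setIntegral_congr_fun measurableSet_Ici fun x hx => ?_
      rw [abs_of_nonneg (le_trans ht hx)]; ring_nf
    rw [this, integral_Ici_eq_integral_Ioi, PRaux.L1 1 t one_pos]
    norm_num
  linarith [key, PRaux.htot]

lemma PRaux.pdf_eq (x : ℝ) :
    gaussianPDFReal 0 1 x = (Real.sqrt (2*Real.pi))⁻¹ * Real.exp (-(x^2)/2) := by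
  simp [gaussianPDFReal]

lemma PRaux.gconv (g : ℝ → ℝ) :
    ∫ x, g x ∂(gaussianReal 0 1)
      = ∫ x, g x * ((Real.sqrt (2*Real.pi))⁻¹ * Real.exp (-(x^2)/2)) := by
  rw [gaussianReal_of_var_ne_zero 0 one_ne_zero]
  have h : gaussianPDF 0 1 = fun x => ((Real.toNNReal (gaussianPDFReal 0 1 x) : NNReal) : ENNReal) :=
    rfl
  rw [h, integral_withDensity_eq_integral_smul (measurable_gaussianPDFReal 0 1).real_toNNReal g]
  congr 1
  funext x
  rw [NNReal.smul_def, Real.coe_toNNReal _ (gaussianPDFReal_nonneg 0 1 x), PRaux.pdf_eq,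
    smul_eq_mul]
  ring

lemma PRaux.gint_iff (g : ℝ → ℝ) :
    Integrable g (gaussianReal 0 1)
      ↔ Integrable (fun x => g x * ((Real.sqrt (2*Real.pi))⁻¹ * Real.exp (-(x^2)/2))) := by
  rw [gaussianReal_of_var_ne_zero 0 one_ne_zero]
  rw [integrable_withDensity_iff (measurable_gaussianPDF 0 1)
    (Filter.Eventually.of_forall fun x => ENNReal.ofReal_lt_top)]
  constructor <;> intro h <;> refine h.congr (Filter.EventuallyEq.of_eq (funext fun x => ?_)) <;>
    rw [gaussianPDF, ENNReal.toReal_ofReal (gaussianPDFReal_nonneg 0 1 x), PRaux.pdf_eq]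

end Helpers

/-- `sign(v) = 1` if `v ≥ 0` and `−1` otherwise. -/
noncomputable def sgn (v : ℝ) : ℝ := if 0 ≤ v then 1 else -1

lemma PRaux.A_gen (c : ℝ) :
    ∫ x, sgn (x + c) * |x| ∂(gaussianReal 0 1)
      = (Real.sqrt (2*Real.pi))⁻¹ * ((∫ x : ℝ, |x| * Real.exp (-(x^2)/2))
          - 2 * ∫ x in Iio (-c), |x| * Real.exp (-(x^2)/2)) := by
  rw [PRaux.gconv]
  have heq : (fun x => sgn (x + c) * |x| * ((Real.sqrt (2*Real.pi))⁻¹ * Real.exp (-(x^2)/2)))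
      = fun x => (Real.sqrt (2*Real.pi))⁻¹ * ((|x| * Real.exp (-(x^2)/2))
          - 2 * Set.indicator (Iio (-c)) (fun y => |y| * Real.exp (-(y^2)/2)) x) := by
    funext x
    by_cases h : 0 ≤ x + c
    · have hx : x ∉ Iio (-c) := by simp only [mem_Iio, not_lt]; linarith
      simp only [sgn, if_pos h, Set.indicator_of_notMem hx]
      ring
    · have hx : x ∈ Iio (-c) := by simp only [mem_Iio]; push_neg at h; linarith
      simp only [sgn, if_neg h, Set.indicator_of_mem hx]
      ring
  rw [heq, integral_const_mul]
  congr 1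
  rw [integral_sub PRaux.intAbsExp1 ((PRaux.intAbsExp1.indicator measurableSet_Iio).const_mul 2),
    integral_const_mul, integral_indicator measurableSet_Iio]

lemma PRaux.A1 (c : ℝ) (hc : 0 ≤ c) :
    ∫ x, sgn (x + c) * |x| ∂(gaussianReal 0 1)
      = 2 * (Real.sqrt (2*Real.pi))⁻¹ * (1 - Real.exp (-(c^2)/2)) := by
  rw [PRaux.A_gen, PRaux.htot, PRaux.T1 (-c) (by linarith)]
  rw [neg_sq]
  ring

lemma PRaux.A2 (c : ℝ) (hc : c ≤ 0) :
    ∫ x, sgn (x + c) * |x| ∂(gaussianReal 0 1)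
      = 2 * (Real.sqrt (2*Real.pi))⁻¹ * (Real.exp (-(c^2)/2) - 1) := by
  rw [PRaux.A_gen, PRaux.htot, PRaux.T2 (-c) (by linarith)]
  rw [neg_sq]
  ring

/-- Gaussian expectation identity (perpendicular component, phase retrieval):
`E[ sign(αZ₁ + βZ₂) · |Z₁| · Z₂ ] = (2/π) sin²φ` with `φ = arctan(β/α)`. -/
theorem gaussian_identity_perpendicular_phase_retrieval (α β : ℝ) (hα : 0 < α) (hβ : 0 ≤ β) :
    (∫ z : ℝ × ℝ, sgn (α * z.1 + β * z.2) * |z.1| * z.2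
        ∂((gaussianReal 0 1).prod (gaussianReal 0 1))) =
      2 / Real.pi * Real.sin (Real.arctan (β / α)) ^ 2 := by
  have h2π : (0:ℝ) < 2*Real.pi := by positivity
  set s : ℝ := (Real.sqrt (2*Real.pi))⁻¹ with hs
  obtain ⟨k, hk0, hβk, hka⟩ : ∃ k : ℝ, 0 ≤ k ∧ β = α * k ∧ β / α = k :=
    ⟨β/α, div_nonneg hβ hα.le, by field_simp, rfl⟩
  rw [hka]
  have hγabs : Integrable (fun x => |x|) (gaussianReal 0 1) := by
    rw [PRaux.gint_iff]
    have h := (PRaux.intAbsExp1).const_mul s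
    refine h.congr (Filter.EventuallyEq.of_eq (funext fun x => ?_))
    ring
  have hsgnmeas : Measurable (fun z : ℝ × ℝ => sgn (α * z.1 + β * z.2)) := by
    unfold sgn
    exact Measurable.ite (measurableSet_le measurable_const
      ((measurable_fst.const_mul α).add (measurable_snd.const_mul β)))
      measurable_const measurable_const
  have hfmeas : Measurable (fun z : ℝ × ℝ => sgn (α * z.1 + β * z.2) * |z.1| * z.2) :=
    (hsgnmeas.mul measurable_fst.abs).mul measurable_snd
  have hbound : Integrable (fun z : ℝ × ℝ => |z.1| * |z.2|)
      ((gaussianReal 0 1).prod (gaussianReal 0 1)) := hγabs.mul_prod hγabs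
  have hFint : Integrable (fun z : ℝ × ℝ => sgn (α * z.1 + β * z.2) * |z.1| * z.2)
      ((gaussianReal 0 1).prod (gaussianReal 0 1)) := by
    refine hbound.mono hfmeas.aestronglyMeasurable (Filter.Eventually.of_forall fun z => ?_)
    have habs : |sgn (α * z.1 + β * z.2)| = 1 := by unfold sgn; split <;> simp
    simp only [Real.norm_eq_abs, abs_mul, habs, one_mul, abs_abs]
    exact le_rfl
  rw [integral_prod_symm _ hFint]
  have inner_eq : ∀ y : ℝ, (∫ x, sgn (α * x + β * y) * |x| * y ∂(gaussianReal 0 1))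
      = |y| * (2 * s * (1 - Real.exp (-((k*y)^2)/2))) := by
    intro y
    have h1 : (fun x => sgn (α * x + β * y) * |x| * y)
        = fun x => (sgn (x + k * y) * |x|) * y := by
      funext x
      have hv : α * x + β * y = α * (x + k * y) := by
        rw [hβk]; ring
      rw [hv]
      have hsg : sgn (α * (x + k * y)) = sgn (x + k * y) := by
        unfold sgn
        congr 1
        exact propext (mul_nonneg_iff_of_pos_left hα)
      rw [hsg]
    rw [h1, integral_mul_const]
    rcases le_or_gt 0 y with hy | hy
    · rw [PRaux.A1 (k * y) (mul_nonneg hk0 hy), abs_of_nonneg hy]; ring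
    · rw [PRaux.A2 (k * y) (mul_nonpos_of_nonneg_of_nonpos hk0 hy.le), abs_of_neg hy]; ring
  simp only [inner_eq]
  rw [PRaux.gconv]
  have h1k : (0:ℝ) < 1 + k^2 := by positivity
  have heq2 : (fun y => |y| * (2 * s * (1 - Real.exp (-((k*y)^2)/2)))
        * (s * Real.exp (-(y^2)/2)))
      = fun y => (2 * s^2) * ((|y| * Real.exp (-(y^2)/2))
          - (|y| * Real.exp (-((1+k^2)*y^2)/2))) := by
    funext y
    have hef : Real.exp (-((k*y)^2)/2) * Real.exp (-(y^2)/2)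
        = Real.exp (-((1+k^2)*y^2)/2) := by
      rw [← Real.exp_add]; congr 1; ring
    rw [← hef]
    ring
  rw [heq2, integral_const_mul,
    integral_sub PRaux.intAbsExp1 (PRaux.intAbsExp (1+k^2) h1k),
    PRaux.htot, PRaux.Ltot (1+k^2) h1k]
  rw [Real.sin_arctan, div_pow, Real.sq_sqrt h1k.le]
  have hs2 : s^2 = (2*Real.pi)⁻¹ := by
    rw [hs, inv_pow, Real.sq_sqrt h2π.le]
  rw [hs2]
  have hπ : Real.pi ≠ 0 := Real.pi_ne_zero
  have h1k' : (1:ℝ) + k^2 ≠ 0 := h1k.ne'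
  field_simp
  ring
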